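/- Let a ∈ ℝ with |3 − a| < 1. The level surface Σ_a = {p ∈ [−π,π]³ : e(p) = a} contains a flat umbilic point — i.e. a point p with s₁²+s₂²+s₃² > 0 at which both the Gauss curvature K(p) and the mean curvature H(p) vanish — if and only if a = 3. Moreover, for a = 3 the eight points (±π/2, ±π/2, ±π/2) are flat umbilic points of Σ₃. -/
import Mathlib


open Real

noncomputable section

/-- The dispersion relation `e(p) = ∑ (1 - cos pⱼ)`. -/
def e3 (p : Fin 3 → ℝ) : ℝ := ∑ i, (1 - Real.cos (p i))

/-- `ssum p = s₁² + s₂² + s₃²`. -/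
def ssum (p : Fin 3 → ℝ) : ℝ := ∑ i, Real.sin (p i) ^ 2

/-- `M(p) = s₁²c₂c₃ + s₂²c₁c₃ + s₃²c₁c₂`. -/
def Mf (p : Fin 3 → ℝ) : ℝ :=
  Real.sin (p 0) ^ 2 * Real.cos (p 1) * Real.cos (p 2) +
  Real.sin (p 1) ^ 2 * Real.cos (p 0) * Real.cos (p 2) +
  Real.sin (p 2) ^ 2 * Real.cos (p 0) * Real.cos (p 1)

/-- Gauss curvature `K(p) = M(p)/(s₁²+s₂²+s₃²)²`. -/
def Kf (p : Fin 3 → ℝ) : ℝ := Mf p / (ssum p) ^ 2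

/-- Mean curvature
`H(p) = (s₁²+s₂²+s₃²)^{−1/2} (3−a − (s₁²c₁+s₂²c₂+s₃²c₃)/(s₁²+s₂²+s₃²))` with `a = e(p)`. -/
def Hf (p : Fin 3 → ℝ) : ℝ :=
  (3 - e3 p - (∑ i, Real.sin (p i) ^ 2 * Real.cos (p i)) / ssum p) / Real.sqrt (ssum p)

lemma key2 (σ e2 p3 D : ℝ) (hDnn : 0 ≤ D) (hsq : σ^2 < 1) (hne : σ ≠ 0)
    (hd : p3 * (σ^2 - 3) = 2*σ) (he : e2 * (σ^2 - 3) = 2*σ^2)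
    (hΔ : D = 18*σ*e2*p3 - 4*σ^3*p3 + σ^2*e2^2 - 4*e2^3 - 27*p3^2) : False := by
  have hfin : D * (σ^2-3)^3 = 4*σ^2*(1-σ^2)*(σ^2-9)^2 := by
    linear_combination (σ^2-3)^3 * hΔ
      + (18*σ*(σ^2-3)*(e2*(σ^2-3)) - 4*σ^3*(σ^2-3)^2
         - 27*(σ^2-3)*(p3*(σ^2-3)+2*σ)) * hd
      + (36*σ^3*(σ^2-3) + σ^2*(σ^2-3)*(e2*(σ^2-3)+2*σ^2)
         - 4*((e2*(σ^2-3))^2 + 2*σ^2*(e2*(σ^2-3)) + 4*σ^4)) * he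
      + 36*σ^2*(1-σ)*(σ^2-3) * he
  have hdneg : (σ^2-3)^3 < 0 := Odd.pow_neg (by decide) (by linarith)
  have hlhs : D * (σ^2-3)^3 ≤ 0 := mul_nonpos_of_nonneg_of_nonpos hDnn hdneg.le
  have hσ2pos : 0 < σ^2 := by positivity
  have hrhs : 0 < 4*σ^2*(1-σ^2)*(σ^2-9)^2 := by
    have h9 : (0:ℝ) < (σ^2-9)^2 := by nlinarith
    have hA : (0:ℝ) < 4*σ^2 := by positivity
    have hB : (0:ℝ) < 1-σ^2 := by linarith
    exact mul_pos (mul_pos hA hB) h9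
  linarith [hfin ▸ hlhs]

lemma key (x y z : ℝ) (hσ : |x + y + z| < 1)
    (h1 : ((1 - x^2) + (1 - y^2) + (1 - z^2)) * (x + y + z)
        = (1 - x^2) * x + (1 - y^2) * y + (1 - z^2) * z)
    (h2 : (1 - x^2) * (y*z) + (1 - y^2) * (x*z) + (1 - z^2) * (x*y) = 0) :
    x + y + z = 0 := by
  by_contra hne
  refine key2 (x+y+z) (x*y+y*z+z*x) (x*y*z) (((x-y)*(y-z)*(z-x))^2)
    (sq_nonneg _) ?_ hne ?_ ?_ (by ring)
  · nlinarith [sq_abs (x+y+z), le_abs_self (x+y+z), abs_nonneg (x+y+z), hσ]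
  · linear_combination -h1 - (x+y+z) * h2
  · linear_combination (x+y+z) * (-h1 - (x+y+z)*h2) + ((x+y+z)^2-3) * h2

/-- For `|3 − a| < 1`, the surface `Σ_a` contains a flat umbilic point iff `a = 3`;
moreover for `a = 3` the eight points `(±π/2, ±π/2, ±π/2)` are flat umbilic points. -/
theorem stmt6 :
    (∀ a : ℝ, |3 - a| < 1 →
      ((∃ p : Fin 3 → ℝ, (∀ i, |p i| ≤ π) ∧ e3 p = a ∧ 0 < ssum p ∧
          Kf p = 0 ∧ Hf p = 0) ↔ a = 3)) ∧
    (∀ ε : Fin 3 → ℝ, (∀ i, ε i = 1 ∨ ε i = -1) →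
      e3 (fun i => ε i * (π / 2)) = 3 ∧ 0 < ssum (fun i => ε i * (π / 2)) ∧
      Kf (fun i => ε i * (π / 2)) = 0 ∧ Hf (fun i => ε i * (π / 2)) = 0) := by
  constructor
  · intro a ha
    constructor
    · rintro ⟨p, -, hea, hS, hK, hH⟩
      have heax : 3 - (Real.cos (p 0) + Real.cos (p 1) + Real.cos (p 2)) = a := by
        simpa [e3, Fin.sum_univ_three] using hea
      have hSx : ssum p = (1 - Real.cos (p 0)^2) + (1 - Real.cos (p 1)^2)
          + (1 - Real.cos (p 2)^2) := by
        simp only [ssum, Fin.sum_univ_three, Real.sin_sq]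
      have hMx : Mf p = 0 := by
        rcases div_eq_zero_iff.mp hK with h | h
        · exact h
        · exact absurd h (pow_ne_zero 2 hS.ne')
      have hsqrt : 0 < Real.sqrt (ssum p) := Real.sqrt_pos.mpr hS
      have hnum : 3 - e3 p - (∑ i, Real.sin (p i)^2 * Real.cos (p i)) / ssum p = 0 := by
        rcases div_eq_zero_iff.mp hH with h | h
        · exact h
        · exact absurd h hsqrt.ne'
      have hT : (∑ i, Real.sin (p i)^2 * Real.cos (p i)) = (3 - a) * ssum p := by
        rw [hea] at hnum
        have h3 : (∑ i, Real.sin (p i)^2 * Real.cos (p i)) / ssum p = 3 - a := by linarith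
        rw [div_eq_iff hS.ne'] at h3
        linarith
      have hT' : (1 - Real.cos (p 0)^2) * Real.cos (p 0)
          + (1 - Real.cos (p 1)^2) * Real.cos (p 1)
          + (1 - Real.cos (p 2)^2) * Real.cos (p 2)
          = (3 - a) * ((1 - Real.cos (p 0)^2) + (1 - Real.cos (p 1)^2)
              + (1 - Real.cos (p 2)^2)) := by
        have h4 := hT
        rw [hSx] at h4
        simp only [Fin.sum_univ_three, Real.sin_sq] at h4
        linear_combination h4
      have hM' : (1 - Real.cos (p 0)^2) * (Real.cos (p 1) * Real.cos (p 2))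
          + (1 - Real.cos (p 1)^2) * (Real.cos (p 0) * Real.cos (p 2))
          + (1 - Real.cos (p 2)^2) * (Real.cos (p 0) * Real.cos (p 1)) = 0 := by
        have h5 := hMx
        simp only [Mf, Real.sin_sq] at h5
        linear_combination h5
      have hσ : Real.cos (p 0) + Real.cos (p 1) + Real.cos (p 2) = 3 - a := by linarith
      have hkey := key (Real.cos (p 0)) (Real.cos (p 1)) (Real.cos (p 2))
        (by rw [hσ]; exact ha) (by rw [hσ]; linear_combination -hT') hM'
      linarith [hσ ▸ hkey]
    · rintro rfl
      refine ⟨fun _ => π/2, fun i => ?_, ?_, ?_, ?_, ?_⟩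
      · rw [abs_of_pos (by positivity)]; linarith [pi_pos]
      · simp [e3, Fin.sum_univ_three, Real.cos_pi_div_two]
      · simp [ssum, Fin.sum_univ_three, Real.sin_pi_div_two]
      · simp [Kf, Mf, Real.cos_pi_div_two]
      · simp [Hf, e3, ssum, Fin.sum_univ_three, Real.cos_pi_div_two, Real.sin_pi_div_two]
  · intro ε hε
    have hc : ∀ i, Real.cos (ε i * (π/2)) = 0 := by
      intro i
      rcases hε i with h | h <;> rw [h] <;>
        simp [neg_mul, one_mul, Real.cos_neg, Real.cos_pi_div_two]
    have hs : ∀ i, Real.sin (ε i * (π/2))^2 = 1 := by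
      intro i
      have h6 := Real.sin_sq_add_cos_sq (ε i * (π/2))
      rw [hc i] at h6
      nlinarith [h6]
    refine ⟨?_, ?_, ?_, ?_⟩
    · simp [e3, Fin.sum_univ_three, hc]
    · simp only [ssum, Fin.sum_univ_three]
      rw [hs 0, hs 1, hs 2]; norm_num
    · simp [Kf, Mf, hc]
    · simp only [Hf, e3, ssum, Fin.sum_univ_three]
      rw [hc 0, hc 1, hc 2, hs 0, hs 1, hs 2]
      norm_num
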